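/- arXiv:2502.16929 — 6 statements merged into one kernel-verified Lean document; each statement's English description precedes it below -/
import Mathlib

section
/- Let φ: ℝⁿ → (-∞,∞] be convex and lower semicontinuous, and let L ⊆ ℝⁿ be a convex body with support function h_L. Then for s > 0, (φ* - h_{sL})*(x) = sup_{z ∈ sL} φ(x+z), where sL = {sz : z ∈ L}. -/
/-!
Because `s • L` is bounded, its support function `h` never takes the value `+∞`, and `φ*` never
takes the value `-∞`; under these two conditions EReal arithmetic gives
`⟪y, x⟫ - (φ* y - h y) = ⨆ z ∈ s • L, ⟪y, x + z⟫ - φ* y` for every `y`. Exchanging the two suprema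
turns the left-hand side into `⨆ z ∈ s • L, φ** (x + z)`, and `φ** = φ` by the Fenchel–Moreau
theorem. That theorem is proved by separating a point lying strictly below the epigraph of `φ`
from the (closed, convex) epigraph; when the separating hyperplane is vertical, it is tilted by
adding it to an affine minorant of `φ`.
-/

open MeasureTheory Pointwise

noncomputable section

/-- Convexity for `(-∞,∞]`-valued functions. -/
def ConvexEReal {n : ℕ} (φ : EuclideanSpace ℝ (Fin n) → EReal) : Prop :=
  ∀ x y : EuclideanSpace ℝ (Fin n), ∀ a b : ℝ, 0 ≤ a → 0 ≤ b → a + b = 1 →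
    φ (a • x + b • y) ≤ (a : EReal) * φ x + (b : EReal) * φ y

/-- The Legendre transform `ψ*(y) = sup_x (⟨x,y⟩ - ψ(x))`. -/
def legendre {n : ℕ} (φ : EuclideanSpace ℝ (Fin n) → EReal)
    (y : EuclideanSpace ℝ (Fin n)) : EReal :=
  ⨆ x : EuclideanSpace ℝ (Fin n), ((inner ℝ x y : ℝ) : EReal) - φ x

/-- The support function of a set, as an `EReal`-valued function. -/
def supportFn {n : ℕ} (K : Set (EuclideanSpace ℝ (Fin n)))
    (y : EuclideanSpace ℝ (Fin n)) : EReal :=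
  ⨆ z ∈ K, ((inner ℝ z y : ℝ) : EReal)

open RealInnerProductSpace

theorem exists_inner_add_mul_eq {F : Type*} [NormedAddCommGroup F] [InnerProductSpace ℝ F]
    [CompleteSpace F] (f : StrongDual ℝ (F × ℝ)) :
    ∃ w : F, ∀ v r, f (v, r) = ⟪w, v⟫ + r * f (0, 1) := by
  refine ⟨(InnerProductSpace.toDual ℝ F).symm (f.comp (.inl ℝ F ℝ)), fun v r => ?_⟩
  rw [InnerProductSpace.toDual_symm_apply, ContinuousLinearMap.comp_apply,
    ContinuousLinearMap.inl_apply, ← smul_eq_mul, ← f.map_smul, ← map_add]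
  simp

theorem EReal.biSup_add_coe {ι : Type*} (s : Set ι) (f : ι → EReal) (r : ℝ) :
    (⨆ i ∈ s, f i) + r = ⨆ i ∈ s, (f i + r) := by
  refine le_antisymm (EReal.add_le_of_le_sub (iSup₂_le fun i hi => ?_))
    (iSup₂_le fun i hi => add_le_add_left (le_iSup₂ (f := fun i _ => f i) i hi) _)
  rw [EReal.le_sub_iff_add_le (.inl (EReal.coe_ne_bot r)) (.inl (EReal.coe_ne_top r))]
  exact le_iSup₂ (f := fun i _ => f i + r) i hi

theorem EReal.coe_sub_sub_eq_add (c β : ℝ) (h : EReal) :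
    (c : EReal) - (β - h) = h + ((c - β : ℝ) : EReal) := by
  induction h using EReal.rec with
  | bot => simp
  | coe h => norm_cast; ring
  | top => rw [EReal.sub_top, EReal.coe_sub_bot, EReal.top_add_coe]

def epigraph {α : Type*} (φ : α → EReal) : Set (α × ℝ) := {p | φ p.1 ≤ p.2}

theorem LowerSemicontinuous.isClosed_epigraph_real {α : Type*} [TopologicalSpace α]
    {φ : α → EReal} (hφ : LowerSemicontinuous φ) : IsClosed (epigraph φ) :=
  hφ.isClosed_epigraph.preimage
    (continuous_fst.prodMk (continuous_coe_real_ereal.comp continuous_snd))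

section

variable {n : ℕ}

local notation "E" => EuclideanSpace ℝ (Fin n)

theorem ConvexEReal.convex_epigraph {φ : E → EReal} (hφ : ConvexEReal φ) :
    Convex ℝ (epigraph φ) := by
  rintro ⟨x, r⟩ (hx : φ x ≤ r) ⟨y, q⟩ (hy : φ y ≤ q) a b ha hb hab
  show φ (a • x + b • y) ≤ ((a * r + b * q : ℝ) : EReal)
  calc φ (a • x + b • y) ≤ a * φ x + b * φ y := hφ x y a b ha hb hab
    _ ≤ a * r + b * q := add_le_add (mul_le_mul_of_nonneg_left hx (by exact_mod_cast ha))
        (mul_le_mul_of_nonneg_left hy (by exact_mod_cast hb))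
    _ = ((a * r + b * q : ℝ) : EReal) := by norm_cast

theorem ConvexEReal.exists_separation {φ : E → EReal} (hconv : ConvexEReal φ)
    (hlsc : LowerSemicontinuous φ) {x : E} {t : ℝ} (ht : (t : EReal) < φ x) :
    ∃ (w : E) (c u : ℝ), (∀ x' (r : ℝ), φ x' ≤ r → ⟪w, x'⟫ + r * c < u) ∧
      u < ⟪w, x⟫ + t * c := by
  obtain ⟨f, u, hf, hfx⟩ := geometric_hahn_banach_closed_point hconv.convex_epigraph
    hlsc.isClosed_epigraph_real (x := (x, t)) ht.not_ge
  obtain ⟨w, hw⟩ := exists_inner_add_mul_eq f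
  exact ⟨w, f (0, 1), u, fun x' r h => hw x' r ▸ hf (x', r) h, hw x t ▸ hfx⟩

theorem legendre_le_coe_iff {φ : E → EReal} {y : E} {α : ℝ} :
    legendre φ y ≤ α ↔ ∀ x (r : ℝ), φ x ≤ r → ⟪x, y⟫ - r ≤ α := by
  refine ⟨fun h x r hr => ?_, fun h => iSup_le fun x => ?_⟩
  · have : ((⟪x, y⟫ - r : ℝ) : EReal) ≤ legendre φ y :=
      le_iSup_of_le x (by rw [EReal.coe_sub]; exact EReal.sub_le_sub le_rfl hr)
    exact_mod_cast this.trans h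
  · cases hφ : φ x using EReal.rec with
    | bot => linarith [h x (⟪x, y⟫ - α - 1) (hφ ▸ bot_le)]
    | coe r => exact_mod_cast h x r hφ.le
    | top => simp

theorem coe_sub_le_legendre_legendre {φ : E → EReal} {y : E} {α : ℝ}
    (h : legendre φ y ≤ α) (x : E) :
    ((⟪y, x⟫ - α : ℝ) : EReal) ≤ legendre (legendre φ) x :=
  le_iSup_of_le y (by rw [EReal.coe_sub]; exact EReal.sub_le_sub le_rfl h)

theorem legendre_legendre_le (φ : E → EReal) (x : E) : legendre (legendre φ) x ≤ φ x := by
  refine iSup_le fun y => ?_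
  have young : ((⟪x, y⟫ : ℝ) : EReal) - φ x ≤ legendre φ y :=
    le_iSup (fun x' => ((⟪x', y⟫ : ℝ) : EReal) - φ x') x
  rw [real_inner_comm]
  cases hφ : φ x using EReal.rec with
  | bot =>
    rw [hφ, EReal.coe_sub_bot, top_le_iff] at young
    rw [young, EReal.sub_top]
  | coe r =>
    rw [hφ] at young
    exact EReal.sub_le_of_le_add'
      ((EReal.sub_le_iff_le_add (.inl (EReal.coe_ne_bot r)) (.inl (EReal.coe_ne_top r))).1 young)
  | top => exact le_top

theorem legendre_ne_bot {φ : E → EReal} (hφ : ∃ x, φ x ≠ ⊤) (y : E) : legendre φ y ≠ ⊥ := by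
  obtain ⟨x, hx⟩ := hφ
  refine ne_bot_of_le_ne_bot ?_ (le_iSup (fun x' => ((⟪x', y⟫ : ℝ) : EReal) - φ x') x)
  cases hφ : φ x using EReal.rec with
  | bot => simp
  | coe r => exact EReal.coe_ne_bot _
  | top => exact absurd hφ hx

theorem legendre_smul_le_of_separation {φ : E → EReal} {w : E} {c u : ℝ} (hc : c < 0)
    (hsep : ∀ x (r : ℝ), φ x ≤ r → ⟪w, x⟫ + r * c < u) :
    legendre φ ((-c)⁻¹ • w) ≤ ((-c)⁻¹ * u : ℝ) := by
  refine legendre_le_coe_iff.2 fun x r hr => ?_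
  have key : ⟪x, (-c)⁻¹ • w⟫ - r = (-c)⁻¹ * (⟪w, x⟫ + r * c) := by
    rw [real_inner_smul_right, real_inner_comm]
    field_simp [hc.ne]
    ring
  rw [key]
  exact mul_le_mul_of_nonneg_left (hsep x r hr).le (inv_nonneg.2 (by linarith))

theorem legendre_add_smul_le {φ : E → EReal} {y w : E} {α u lam : ℝ}
    (hy : legendre φ y ≤ α) (hw : ∀ x (r : ℝ), φ x ≤ r → ⟪w, x⟫ ≤ u) (hlam : 0 ≤ lam) :
    legendre φ (y + lam • w) ≤ (α + lam * u : ℝ) := by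
  refine legendre_le_coe_iff.2 fun x r hr => ?_
  have h₁ := legendre_le_coe_iff.1 hy x r hr
  have h₂ := mul_le_mul_of_nonneg_left (hw x r hr) hlam
  rw [inner_add_right, real_inner_smul_right, real_inner_comm w x]
  linarith

theorem ConvexEReal.exists_legendre_le {φ : E → EReal} (hconv : ConvexEReal φ)
    (hlsc : LowerSemicontinuous φ) {x₀ : E} {r₀ : ℝ} (h₀ : φ x₀ = r₀) :
    ∃ (y : E) (α : ℝ), legendre φ y ≤ α := by
  obtain ⟨w, c, u, hsep, hx₀⟩ := hconv.exists_separation hlsc (t := r₀ - 1)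
    (h₀ ▸ EReal.coe_lt_coe_iff.2 (sub_one_lt r₀))
  have hc : c < 0 := by nlinarith [hsep x₀ r₀ h₀.le]
  exact ⟨_, _, legendre_smul_le_of_separation hc hsep⟩

theorem exists_legendre_le_of_lt {φ : E → EReal} (hbot : ∀ x, φ x ≠ ⊥)
    (hproper : ∃ x, φ x ≠ ⊤) (hconv : ConvexEReal φ) (hlsc : LowerSemicontinuous φ) {x : E}
    {t : ℝ} (ht : (t : EReal) < φ x) :
    ∃ (y : E) (α : ℝ), legendre φ y ≤ α ∧ t < ⟪y, x⟫ - α := by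
  obtain ⟨x₀, hx₀⟩ := hproper
  obtain ⟨r₀, hr₀⟩ : ∃ r₀ : ℝ, φ x₀ = r₀ := ⟨_, (EReal.coe_toReal hx₀ (hbot x₀)).symm⟩
  obtain ⟨w, c, u, hsep, hxt⟩ := hconv.exists_separation hlsc ht
  have hc : c ≤ 0 := by
    by_contra! hc
    have hlt := hsep x₀ (max r₀ ((u - ⟪w, x₀⟫) / c))
      (hr₀.trans_le (EReal.coe_le_coe_iff.2 (le_max_left _ _)))
    have hge := mul_le_mul_of_nonneg_right (le_max_right r₀ ((u - ⟪w, x₀⟫) / c)) hc.le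
    rw [div_mul_cancel₀ _ hc.ne'] at hge
    linarith
  rcases hc.lt_or_eq with hc | rfl
  · refine ⟨_, _, legendre_smul_le_of_separation hc hsep, ?_⟩
    rw [real_inner_smul_left, ← mul_sub, lt_inv_mul_iff₀ (neg_pos.2 hc)]
    linarith
  · -- the hyperplane is vertical: tilt an affine minorant of `φ` by a multiple of it
    obtain ⟨y₀, α₀, hy₀⟩ := hconv.exists_legendre_le hlsc hr₀
    have hw : ∀ x' (r : ℝ), φ x' ≤ r → ⟪w, x'⟫ ≤ u := fun x' r hr => by
      linarith [hsep x' r hr]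
    have hd : 0 < ⟪w, x⟫ - u := by linarith
    obtain ⟨lam, hlam₀, hlam⟩ : ∃ lam : ℝ, 0 ≤ lam ∧ t - ⟪y₀, x⟫ + α₀ < lam * (⟪w, x⟫ - u) :=
      ⟨(|t - ⟪y₀, x⟫ + α₀| + 1) / (⟪w, x⟫ - u), div_nonneg (by positivity) hd.le,
        by rw [div_mul_cancel₀ _ hd.ne']; linarith [le_abs_self (t - ⟪y₀, x⟫ + α₀)]⟩
    refine ⟨_, _, legendre_add_smul_le hy₀ hw hlam₀, ?_⟩
    rw [inner_add_left, real_inner_smul_left]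
    linarith

theorem legendre_legendre_eq {φ : E → EReal} (hbot : ∀ x, φ x ≠ ⊥) (hproper : ∃ x, φ x ≠ ⊤)
    (hconv : ConvexEReal φ) (hlsc : LowerSemicontinuous φ) (x : E) :
    legendre (legendre φ) x = φ x := by
  refine le_antisymm (legendre_legendre_le φ x) (EReal.ge_of_forall_gt_iff_ge.1 fun t ht => ?_)
  obtain ⟨y, α, hy, htα⟩ := exists_legendre_le_of_lt hbot hproper hconv hlsc ht
  exact (EReal.coe_le_coe_iff.2 htα.le).trans (coe_sub_le_legendre_legendre hy x)

theorem supportFn_ne_top {K : Set E} (hK : Bornology.IsBounded K) (y : E) :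
    supportFn K y ≠ ⊤ := by
  obtain ⟨R, hR⟩ := hK.exists_norm_le
  refine ne_top_of_le_ne_top (EReal.coe_ne_top (R * ‖y‖)) (iSup₂_le fun z hz => ?_)
  exact EReal.coe_le_coe_iff.2
    ((real_inner_le_norm z y).trans (mul_le_mul_of_nonneg_right (hR z hz) (norm_nonneg y)))

theorem coe_inner_sub_sub_supportFn {K : Set E} (hK : Bornology.IsBounded K) (x y : E)
    {a : EReal} (ha : a ≠ ⊥) :
    ((⟪y, x⟫ : ℝ) : EReal) - (a - supportFn K y) = ⨆ z ∈ K, ((⟪y, x + z⟫ : ℝ) : EReal) - a := by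
  induction a using EReal.rec with
  | bot => exact absurd rfl ha
  | coe β =>
    rw [EReal.coe_sub_sub_eq_add, supportFn, EReal.biSup_add_coe]
    refine iSup_congr fun z => iSup_congr fun _ => ?_
    rw [inner_add_right, real_inner_comm z y]
    norm_cast
    ring
  | top => simp [EReal.top_sub (supportFn_ne_top hK y)]

end

theorem statement2_general (n : ℕ) (φ : EuclideanSpace ℝ (Fin n) → EReal)
    (hbot : ∀ x, φ x ≠ ⊥) (hproper : ∃ x, φ x ≠ ⊤)
    (hconv : ConvexEReal φ) (hlsc : LowerSemicontinuous φ)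
    (L : Set (EuclideanSpace ℝ (Fin n)))
    (hLcomp : IsCompact L)
    (s : ℝ) :
    ∀ x, legendre (fun y => legendre φ y - supportFn (s • L) y) x
      = ⨆ z ∈ s • L, φ (x + z) := by
  intro x
  have hK : Bornology.IsBounded (s • L) := (hLcomp.smul s).isBounded
  calc legendre (fun y => legendre φ y - supportFn (s • L) y) x
      = ⨆ y, ⨆ z ∈ s • L, ((⟪y, x + z⟫ : ℝ) : EReal) - legendre φ y :=
        iSup_congr fun y => coe_inner_sub_sub_supportFn hK x y (legendre_ne_bot hproper y)
    _ = ⨆ z ∈ s • L, legendre (legendre φ) (x + z) := by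
        rw [iSup_comm]
        exact iSup_congr fun z => iSup_comm
    _ = ⨆ z ∈ s • L, φ (x + z) := by
        simp_rw [legendre_legendre_eq hbot hproper hconv hlsc]

/-- For `φ` proper convex lsc and a convex body `L`, `s > 0`,
`(φ* - h_{sL})*(x) = sup_{z ∈ sL} φ(x+z)`. -/
theorem statement2 (n : ℕ) (φ : EuclideanSpace ℝ (Fin n) → EReal)
    (hbot : ∀ x, φ x ≠ ⊥) (hproper : ∃ x, φ x ≠ ⊤)
    (hconv : ConvexEReal φ) (hlsc : LowerSemicontinuous φ)
    (L : Set (EuclideanSpace ℝ (Fin n)))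
    (hLconv : Convex ℝ L) (hLcomp : IsCompact L) (hLint : (interior L).Nonempty)
    (s : ℝ) (hs : 0 < s) :
    ∀ x, legendre (fun y => legendre φ y - supportFn (s • L) y) x
      = ⨆ z ∈ s • L, φ (x + z) :=
  statement2_general n φ hbot hproper hconv hlsc L hLcomp s
end
end

section
/- Define ψ: ℝⁿ → ℝ by ψ(x) = a|x| + b with a > 0, b ∈ ℝ, and set C = max{1/a, e^{-b}}. Then for every u ∈ ℝⁿ with u ≠ 0 and σ = C·log(1+|u|)/|u|, we have log(1/σ) ≤ ψ(σu); that is, the point (σu, log(1/σ)) lies in the epigraph of ψ. -/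
/-- For `ψ(x) = a‖x‖ + b` with `a > 0`, `C = max (1/a) (e^{-b})`,
`u ≠ 0` and `σ = C log(1+‖u‖)/‖u‖`, one has `log (1/σ) ≤ ψ(σ u) = a‖σ • u‖ + b`,
i.e. `(σ u, log(1/σ))` lies in the epigraph of `ψ`. -/
theorem statement5 (n : ℕ) (a b : ℝ) (ha : 0 < a)
    (u : EuclideanSpace ℝ (Fin n)) (hu : u ≠ 0)
    (C σ : ℝ) (hC : C = max (1 / a) (Real.exp (-b)))
    (hσ : σ = C * Real.log (1 + ‖u‖) / ‖u‖) :
    Real.log (1 / σ) ≤ a * ‖σ • u‖ + b := by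
  have ht : 0 < ‖u‖ := norm_pos_iff.mpr hu
  set t := ‖u‖ with htdef
  have hL : 0 < Real.log (1 + t) := Real.log_pos (by linarith)
  set L := Real.log (1 + t) with hLdef
  have hCpos : 0 < C := by rw [hC]; exact lt_max_of_lt_right (Real.exp_pos _)
  have hσpos : 0 < σ := by rw [hσ]; positivity
  have hst : σ * t = C * L := by rw [hσ]; field_simp
  have hnorm : ‖σ • u‖ = σ * t := by
    rw [norm_smul, Real.norm_eq_abs, abs_of_pos hσpos]
  rw [hnorm, hst]
  have haC : 1 ≤ a * C := by
    have h1 : 1/a ≤ C := hC ▸ le_max_left _ _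
    rw [div_le_iff₀ ha] at h1
    nlinarith
  have heb : 1 ≤ C * Real.exp b := by
    have h1 : Real.exp (-b) ≤ C := hC ▸ le_max_right _ _
    have h2 : Real.exp (-b) * Real.exp b = 1 := by
      rw [← Real.exp_add]; simp
    nlinarith [Real.exp_pos b]
  -- key: t ≤ L * (1 + t)
  have hLt : t ≤ L * (1 + t) := by
    have h := Real.log_le_sub_one_of_pos (show (0:ℝ) < 1/(1+t) by positivity)
    rw [Real.log_div one_ne_zero (by positivity), Real.log_one] at h
    have h3 : (1/(1+t)) * (1+t) = 1 := by field_simp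
    nlinarith
  rw [Real.log_le_iff_le_exp (by positivity)]
  have h1σ : 1/σ = t / (C * L) := by
    rw [hσ]; field_simp
  rw [h1σ, div_le_iff₀ (by positivity)]
  have hexp1 : Real.exp L ≤ Real.exp (a * (C * L)) :=
    Real.exp_le_exp.mpr (by nlinarith)
  have hexpL : Real.exp L = 1 + t := Real.exp_log (by linarith)
  have hexpadd : Real.exp (a * (C * L) + b) = Real.exp (a * (C * L)) * Real.exp b := by
    rw [← Real.exp_add]
  rw [hexpadd]
  have e1 : 1 + t ≤ Real.exp (a * (C * L)) := by rw [← hexpL]; exact hexp1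
  have e2 : L ≤ Real.exp b * (C * L) := by nlinarith [Real.exp_pos b]
  calc t ≤ L * (1 + t) := hLt
    _ ≤ (Real.exp b * (C * L)) * (1 + t) :=
        mul_le_mul_of_nonneg_right e2 (by linarith)
    _ ≤ (Real.exp b * (C * L)) * Real.exp (a * (C * L)) :=
        mul_le_mul_of_nonneg_left e1 (by positivity)
    _ = Real.exp (a * (C * L)) * Real.exp b * (C * L) := by ring
end

section
/- Let φ: ℝⁿ → (-∞,∞] be convex with minimum value m = min φ, and suppose φ(x) < m + 1/2 for all |x| ≤ ε where 0 < ε. Let (x₀,t₀) be a boundary point of the epigraph epi(φ) ⊆ ℝⁿ⁺¹ and let v = (v_x, v_t) ∈ ℝⁿ × ℝ be an outer normal vector to epi(φ) at (x₀,t₀). Then ⟨x₀, v_x⟩ - v_t ≥ min(ε, 1/2)·|v|. -/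
noncomputable section

/-!
Test the outer-normal inequality against the points `(y, m + 1/2)` of the epigraph with
`‖y‖ ≤ ε`, choosing `y` in the direction of `v_x`: this gives
`ε ‖v_x‖ ≤ ⟪x₀, v_x⟫ - (m + 1/2 - t₀) v_t`. Since the epigraph is unbounded upwards, `v_t ≤ 0`,
and since `(x₀, t₀)` lies in its closure, `t₀ ≥ m`; hence `⟪x₀, v_x⟫ - v_t ≥ ε ‖v_x‖ + |v_t| / 2`,
which dominates `min(ε, 1/2) (‖v_x‖ + |v_t|) ≥ min(ε, 1/2) |v|`.
-/

lemma nonpos_of_forall_ge_add_mul_nonpos {a b c : ℝ} (h : ∀ s, c ≤ s → a + s * b ≤ 0) :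
    b ≤ 0 := by
  by_contra! hb
  have hs : c ≤ c + (|a + c * b| + 1) / b := le_add_of_nonneg_right (by positivity)
  have key := h _ hs
  rw [add_mul, div_mul_cancel₀ _ hb.ne'] at key
  linarith [neg_abs_le (a + c * b)]

lemma le_snd_of_mem_closure_epigraph {X : Type*} [TopologicalSpace X] {φ : X → EReal} {m : ℝ}
    (hmin : ∀ x, (m : EReal) ≤ φ x) {p : X × ℝ}
    (hp : p ∈ closure {q : X × ℝ | φ q.1 ≤ (q.2 : EReal)}) : m ≤ p.2 := by
  refine closure_minimal (fun q hq ↦ ?_) (isClosed_le continuous_const continuous_snd) hp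
  exact EReal.coe_le_coe_iff.mp ((hmin q.1).trans hq)

lemma min_mul_sqrt_sq_add_sq_le {p q a b : ℝ} (hp : 0 ≤ p) (hq : 0 ≤ q) (ha : 0 ≤ a)
    (hb : 0 ≤ b) : min p q * √(a ^ 2 + b ^ 2) ≤ p * a + q * b := by
  have hsqrt : √(a ^ 2 + b ^ 2) ≤ a + b :=
    Real.sqrt_le_iff.mpr ⟨by positivity, by nlinarith⟩
  calc min p q * √(a ^ 2 + b ^ 2) ≤ min p q * (a + b) :=
        mul_le_mul_of_nonneg_left hsqrt (le_min hp hq)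
    _ ≤ p * a + q * b := by
        nlinarith [min_le_left p q, min_le_right p q]

section OuterNormal

open scoped RealInnerProductSpace

variable {E : Type*} [NormedAddCommGroup E] [InnerProductSpace ℝ E] {φ : E → EReal}
  {x₀ vx : E} {t₀ vt : ℝ}

lemma outerNormal_snd_nonpos
    (hnormal : ∀ y (s : ℝ), φ y ≤ (s : EReal) → ⟪y - x₀, vx⟫ + (s - t₀) * vt ≤ 0)
    {y : E} {c : ℝ} (hy : φ y ≤ (c : EReal)) : vt ≤ 0 :=
  nonpos_of_forall_ge_add_mul_nonpos (a := ⟪y - x₀, vx⟫ - t₀ * vt) (c := c) fun s hs ↦ by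
    linarith [hnormal y s (hy.trans (EReal.coe_le_coe_iff.mpr hs))]

lemma mul_norm_add_le_inner_of_le_on_closedBall
    (hnormal : ∀ y (s : ℝ), φ y ≤ (s : EReal) → ⟪y - x₀, vx⟫ + (s - t₀) * vt ≤ 0)
    {ε c : ℝ} (hε : 0 ≤ ε)
    (hball : ∀ y, ‖y‖ ≤ ε → φ y ≤ (c : EReal)) :
    ε * ‖vx‖ + (c - t₀) * vt ≤ ⟪x₀, vx⟫ := by
  set y := (ε / ‖vx‖) • vx
  have hy : ‖y‖ ≤ ε := by
    rcases eq_or_ne vx 0 with rfl | hvx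
    · simpa [y] using hε
    · rw [norm_smul, Real.norm_of_nonneg (by positivity),
        div_mul_cancel₀ _ (norm_ne_zero_iff.mpr hvx)]
  have hinner : ⟪y, vx⟫ = ε * ‖vx‖ := by
    rw [real_inner_smul_left, real_inner_self_eq_norm_sq]
    rcases eq_or_ne ‖vx‖ 0 with h | h
    · simp [h]
    · field_simp
  have htest := hnormal y c (hball y hy)
  rw [inner_sub_left, hinner] at htest
  linarith

end OuterNormal

theorem statement7_general (n : ℕ) (φ : EuclideanSpace ℝ (Fin n) → EReal)
    (m ε : ℝ) (hε : 0 < ε)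
    (hmin : ∀ x, (m : EReal) ≤ φ x)
    (hball : ∀ x, ‖x‖ ≤ ε → φ x < (m : EReal) + ((1 / 2 : ℝ) : EReal))
    (x₀ : EuclideanSpace ℝ (Fin n)) (t₀ : ℝ)
    (hbdry : (x₀, t₀) ∈ frontier {p : EuclideanSpace ℝ (Fin n) × ℝ | φ p.1 ≤ (p.2 : EReal)})
    (vx : EuclideanSpace ℝ (Fin n)) (vt : ℝ)
    (hnormal : ∀ (y : EuclideanSpace ℝ (Fin n)) (s : ℝ), φ y ≤ (s : EReal) →
      (inner ℝ (y - x₀) vx : ℝ) + (s - t₀) * vt ≤ 0) :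
    min ε (1 / 2) * Real.sqrt (‖vx‖ ^ 2 + vt ^ 2) ≤ (inner ℝ x₀ vx : ℝ) - vt := by
  have hball' : ∀ y, ‖y‖ ≤ ε → φ y ≤ ((m + 1 / 2 : ℝ) : EReal) := fun y hy ↦ by
    exact_mod_cast (hball y hy).le
  have hvt : vt ≤ 0 := outerNormal_snd_nonpos hnormal (hball' 0 (by simpa using hε.le))
  have ht₀ : m ≤ t₀ := le_snd_of_mem_closure_epigraph hmin (frontier_subset_closure hbdry)
  have hkey := mul_norm_add_le_inner_of_le_on_closedBall hnormal hε.le hball'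
  calc min ε (1 / 2) * √(‖vx‖ ^ 2 + vt ^ 2) = min ε (1 / 2) * √(‖vx‖ ^ 2 + (-vt) ^ 2) := by
        rw [neg_sq]
    _ ≤ ε * ‖vx‖ + 1 / 2 * -vt :=
        min_mul_sqrt_sq_add_sq_le hε.le (by norm_num) (norm_nonneg vx) (neg_nonneg.mpr hvt)
    _ ≤ inner ℝ x₀ vx - vt := by
        nlinarith [mul_nonneg_of_nonpos_of_nonpos (sub_nonpos.mpr ht₀) hvt]

/-- If `φ` is convex with minimum value `m`, `φ < m + 1/2` on the ball of radius
`ε > 0`, and `v = (v_x, v_t)` is an outer normal to `epi(φ)` at a boundary point `(x₀,t₀)`,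
then `⟨x₀, v_x⟩ - v_t ≥ min(ε,1/2)·|v|`. -/
theorem statement7 (n : ℕ) (φ : EuclideanSpace ℝ (Fin n) → EReal)
    (hbot : ∀ x, φ x ≠ ⊥) (hconv : ConvexEReal φ)
    (m ε : ℝ) (hε : 0 < ε)
    (hmin : ∀ x, (m : EReal) ≤ φ x)
    (hball : ∀ x, ‖x‖ ≤ ε → φ x < (m : EReal) + ((1 / 2 : ℝ) : EReal))
    (x₀ : EuclideanSpace ℝ (Fin n)) (t₀ : ℝ)
    (hbdry : (x₀, t₀) ∈ frontier {p : EuclideanSpace ℝ (Fin n) × ℝ | φ p.1 ≤ (p.2 : EReal)})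
    (vx : EuclideanSpace ℝ (Fin n)) (vt : ℝ)
    (hnormal : ∀ (y : EuclideanSpace ℝ (Fin n)) (s : ℝ), φ y ≤ (s : EReal) →
      (inner ℝ (y - x₀) vx : ℝ) + (s - t₀) * vt ≤ 0) :
    min ε (1 / 2) * Real.sqrt (‖vx‖ ^ 2 + vt ^ 2) ≤ (inner ℝ x₀ vx : ℝ) - vt :=
  statement7_general n φ m ε hε hmin hball x₀ t₀ hbdry vx vt hnormal

end
end

section
/- Let φ: ℝⁿ → (-∞,∞] be convex, lower semicontinuous, coercive (φ(x) ≥ a|x| + b with a > 0), and bounded above on some ball B̄_ε(0). For u ∈ ℝⁿ consider the curve γ_u(s) = (su, log(1/s)) for s ∈ (0,∞). Then there exists s₀ ∈ (0,∞) such that γ_u(s₀) ∈ ∂epi(φ), γ_u(s) ∈ int(epi(φ)) for all s < s₀, and γ_u(s) ∉ epi(φ) for all s > s₀; moreover s₀ is unique. (Assume additionally φ(x) < min φ + 1/2 on B̄_ε(0).) -/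
/-! Reparametrize the curve by `t = log (1/s)`, so that it becomes `γ t = (exp (-t) • u, t)`.
Points of `epi φ` have height at least `m`, and the box `B_ε(0) × (m + 1/2, ∞)` lies in the
interior of `epi φ`. If `γ t ∈ epi φ` and `δ > 0`, then `γ (t + δ)` is the convex combination
`(1 - e^{-δ}) (0, q) + e^{-δ} γ t` with `q = t + δ / (1 - e^{-δ}) > t + 1`, a point of that box,
so it lies in the interior. Hence the `t` with `γ t ∈ epi φ` form a closed half-line `[t₀, ∞)`
(closed by lower semicontinuity), and `s₀ = exp (-t₀)`. -/

noncomputable section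

open Set Filter Topology Real

theorem exists_frontier_crossing {X : Type*} [TopologicalSpace X] {C : Set X}
    (hC : IsClosed C) {γ : ℝ → X} (hγ : Continuous γ) (hne : (γ ⁻¹' C).Nonempty)
    (hbdd : BddBelow (γ ⁻¹' C)) (hint : ∀ t ∈ γ ⁻¹' C, ∀ t', t < t' → γ t' ∈ interior C) :
    ∃ t₀, γ t₀ ∈ frontier C ∧ (∀ t, t₀ < t → γ t ∈ interior C) ∧ ∀ t < t₀, γ t ∉ C := by
  have hmem : sInf (γ ⁻¹' C) ∈ γ ⁻¹' C := (hC.preimage hγ).csInf_mem hne hbdd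
  have hout : ∀ t < sInf (γ ⁻¹' C), γ t ∉ C := fun t ht =>
    notMem_of_lt_csInf (s := γ ⁻¹' C) ht hbdd
  refine ⟨sInf (γ ⁻¹' C), ?_, hint _ hmem, hout⟩
  rw [frontier_eq_closure_inter_closure]
  exact ⟨subset_closure hmem, mem_closure_of_tendsto (b := 𝓝[<] _)
    (hγ.continuousAt.tendsto.mono_left nhdsWithin_le_nhds)
    (eventually_nhdsWithin_of_forall hout)⟩

theorem le_of_mem_frontier_of_forall_gt_notMem {α X : Type*} [LinearOrder α]
    [TopologicalSpace X] {C : Set X} (hC : IsClosed C) {c : α → X} {s₀ s₁ : α}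
    (h₁ : c s₁ ∈ frontier C) (h₀ : ∀ s, s₀ < s → c s ∉ C) : s₁ ≤ s₀ :=
  not_lt.1 fun h => h₀ s₁ h (hC.frontier_subset h₁)

theorem LowerSemicontinuous.isClosed_realEpigraph {E : Type*} [TopologicalSpace E]
    {φ : E → EReal} (hφ : LowerSemicontinuous φ) : IsClosed {p : E × ℝ | φ p.1 ≤ p.2} :=
  hφ.isClosed_epigraph.preimage
    (continuous_fst.prodMk (continuous_coe_real_ereal.comp continuous_snd))

theorem prod_Ioi_subset_interior_realEpigraph {E : Type*} [TopologicalSpace E]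
    (φ : E → EReal) {U : Set E} (hU : IsOpen U) {c : ℝ} (hφ : ∀ x ∈ U, φ x ≤ c) :
    U ×ˢ Ioi c ⊆ interior {p : E × ℝ | φ p.1 ≤ p.2} :=
  interior_maximal (fun p hp => (hφ p.1 hp.1).trans (EReal.coe_le_coe_iff.2 hp.2.le))
    (hU.prod isOpen_Ioi)

theorem ConvexEReal.convex_realEpigraph {n : ℕ} {φ : EuclideanSpace ℝ (Fin n) → EReal}
    (hφ : ConvexEReal φ) : Convex ℝ {p : EuclideanSpace ℝ (Fin n) × ℝ | φ p.1 ≤ p.2} := by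
  rintro ⟨x, s⟩ hx ⟨y, t⟩ hy a b ha hb hab
  calc φ (a • x + b • y) ≤ (a : EReal) * φ x + (b : EReal) * φ y := hφ x y a b ha hb hab
    _ ≤ (a : EReal) * s + (b : EReal) * t := by
      gcongr <;> first | exact_mod_cast ha | exact_mod_cast hb | assumption
    _ = ((a * s + b * t : ℝ) : EReal) := by norm_cast

theorem Convex.exp_neg_smul_mem_interior {E : Type*} [AddCommGroup E] [Module ℝ E]
    [TopologicalSpace E] [IsTopologicalAddGroup E] [ContinuousConstSMul ℝ E]
    {C : Set (E × ℝ)} (hC : Convex ℝ C) {c : ℝ}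
    (haxis : ∀ q, c < q → ((0 : E), q) ∈ interior C)
    {x : E} {t : ℝ} (hxt : (x, t) ∈ C) (ht : c ≤ t + 1) {δ : ℝ} (hδ : 0 < δ) :
    (exp (-δ) • x, t + δ) ∈ interior C := by
  have hl0 : 0 < exp (-δ) := exp_pos _
  have hl : exp (-δ) < 1 := exp_lt_one_iff.2 (neg_lt_zero.2 hδ)
  have hlδ : 1 - δ < exp (-δ) := by linarith [add_one_lt_exp (neg_ne_zero.2 hδ.ne')]
  generalize exp (-δ) = l at *
  have hq : c < t + δ / (1 - l) := by
    have : 1 < δ / (1 - l) := (one_lt_div (sub_pos.2 hl)).2 (by linarith)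
    linarith
  convert hC.combo_interior_self_mem_interior (haxis _ hq) hxt (sub_pos.2 hl) hl0.le
    (sub_add_cancel 1 l) using 1
  ext
  · simp
  · have : 1 - l ≠ 0 := (sub_pos.2 hl).ne'
    simp only [Prod.snd_add, Prod.smul_snd, smul_eq_mul]
    field_simp
    ring

theorem exists_exp_neg_smul_curve_crossing {E : Type*} [NormedAddCommGroup E] [NormedSpace ℝ E]
    {C : Set (E × ℝ)} (hC : IsClosed C) (hconv : Convex ℝ C) {c ε : ℝ} (hε : 0 < ε)
    (hbox : Metric.ball 0 ε ×ˢ Ioi c ⊆ interior C) (hlow : ∀ p ∈ C, c ≤ p.2 + 1) (u : E) :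
    ∃ t₀, (exp (-t₀) • u, t₀) ∈ frontier C ∧ (∀ t, t₀ < t → (exp (-t) • u, t) ∈ interior C) ∧
      ∀ t < t₀, (exp (-t) • u, t) ∉ C := by
  let γ : ℝ → E × ℝ := fun t => (exp (-t) • u, t)
  have hne : (γ ⁻¹' C).Nonempty := by
    have hlim : Tendsto (fun t => exp (-t) • u) atTop (𝓝 0) := by
      simpa using tendsto_exp_neg_atTop_nhds_zero.smul_const u
    obtain ⟨t, hu, ht⟩ :=
      ((hlim.eventually_mem (Metric.ball_mem_nhds 0 hε)).and (eventually_gt_atTop c)).exists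
    exact ⟨t, show γ t ∈ C from interior_subset (hbox (mem_prod.2 ⟨hu, ht⟩))⟩
  have hlater : ∀ t ∈ γ ⁻¹' C, ∀ t', t < t' → γ t' ∈ interior C := by
    intro t ht t' htt'
    have := hconv.exp_neg_smul_mem_interior (fun q hq => hbox ⟨Metric.mem_ball_self hε, hq⟩) ht
      (hlow _ ht) (sub_pos.2 htt')
    convert this using 1
    simp only [γ, smul_smul, ← exp_add, Prod.mk.injEq]
    constructor <;> ring_nf
  exact exists_frontier_crossing hC (by fun_prop) hne
    ⟨c - 1, fun t ht => by linarith [hlow _ ht]⟩ hlater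

theorem existsUnique_log_curve_crossing {E : Type*} [TopologicalSpace E] [SMul ℝ E]
    {C : Set (E × ℝ)} (hC : IsClosed C) (u : E) {t₀ : ℝ}
    (hfr : (exp (-t₀) • u, t₀) ∈ frontier C)
    (hint : ∀ t, t₀ < t → (exp (-t) • u, t) ∈ interior C)
    (hout : ∀ t < t₀, (exp (-t) • u, t) ∉ C) :
    ∃! s₀ : ℝ, 0 < s₀ ∧ (s₀ • u, log (1 / s₀)) ∈ frontier C ∧
      (∀ s : ℝ, 0 < s → s < s₀ → (s • u, log (1 / s)) ∈ interior C) ∧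
      (∀ s : ℝ, s₀ < s → (s • u, log (1 / s)) ∉ C) := by
  have hcurve : ∀ s, 0 < s → (s • u, log (1 / s)) = (exp (-log (1 / s)) • u, log (1 / s)) :=
    fun s hs => by simp [exp_log hs]
  have hfr' : (exp (-t₀) • u, log (1 / exp (-t₀))) ∈ frontier C := by simpa using hfr
  have hout' : ∀ s, exp (-t₀) < s → (s • u, log (1 / s)) ∉ C := fun s hlt => by
    have hs := (exp_pos _).trans hlt
    rw [hcurve s hs]
    refine hout _ ?_
    rwa [one_div, log_inv, neg_lt, lt_log_iff_exp_lt hs]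
  refine ⟨exp (-t₀), ⟨exp_pos _, hfr', fun s hs hlt => ?_, hout'⟩, fun s₁ h₁ =>
    le_antisymm (le_of_mem_frontier_of_forall_gt_notMem hC h₁.2.1 hout')
      (le_of_mem_frontier_of_forall_gt_notMem hC hfr' h₁.2.2.2)⟩
  rw [hcurve s hs]
  refine hint _ ?_
  rwa [one_div, log_inv, lt_neg, log_lt_iff_lt_exp hs]

theorem statement8_general (n : ℕ) (φ : EuclideanSpace ℝ (Fin n) → EReal)
    (hconv : ConvexEReal φ) (hlsc : LowerSemicontinuous φ)
    (m ε : ℝ) (hε : 0 < ε)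
    (hmin : ∀ x, (m : EReal) ≤ φ x)
    (hball : ∀ x, ‖x‖ ≤ ε → φ x < (m : EReal) + ((1 / 2 : ℝ) : EReal))
    (u : EuclideanSpace ℝ (Fin n)) :
    ∃! s₀ : ℝ, 0 < s₀ ∧
      (s₀ • u, Real.log (1 / s₀)) ∈
        frontier {p : EuclideanSpace ℝ (Fin n) × ℝ | φ p.1 ≤ (p.2 : EReal)} ∧
      (∀ s : ℝ, 0 < s → s < s₀ → (s • u, Real.log (1 / s)) ∈
        interior {p : EuclideanSpace ℝ (Fin n) × ℝ | φ p.1 ≤ (p.2 : EReal)}) ∧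
      (∀ s : ℝ, s₀ < s → (s • u, Real.log (1 / s)) ∉
        {p : EuclideanSpace ℝ (Fin n) × ℝ | φ p.1 ≤ (p.2 : EReal)}) := by
  set C := {p : EuclideanSpace ℝ (Fin n) × ℝ | φ p.1 ≤ (p.2 : EReal)}
  have hC : IsClosed C := hlsc.isClosed_realEpigraph
  have hbox : Metric.ball 0 ε ×ˢ Ioi (m + 1 / 2) ⊆ interior C :=
    prod_Ioi_subset_interior_realEpigraph φ Metric.isOpen_ball fun x hx => by
      simpa only [EReal.coe_add] using (hball x (mem_ball_zero_iff.1 hx).le).le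
  have hlow : ∀ p ∈ C, m + 1 / 2 ≤ p.2 + 1 := fun p hp => by
    linarith [EReal.coe_le_coe_iff.1 ((hmin p.1).trans hp)]
  obtain ⟨t₀, hfr, hint, hout⟩ :=
    exists_exp_neg_smul_curve_crossing hC hconv.convex_realEpigraph hε hbox hlow u
  exact existsUnique_log_curve_crossing hC u hfr hint hout

/-- for `φ` convex, lsc, coercive, attaining its minimum `m`, with
`φ < m + 1/2` on the ball `B̄_ε(0)`, and any `u ∈ ℝⁿ`, there is a unique `s₀ > 0` such that
the curve `γ_u(s) = (su, log(1/s))` is in the interior of `epi(φ)` for `s < s₀`, on the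
boundary at `s₀`, and outside `epi(φ)` for `s > s₀`. -/
theorem statement8 (n : ℕ) (φ : EuclideanSpace ℝ (Fin n) → EReal)
    (hbot : ∀ x, φ x ≠ ⊥) (hconv : ConvexEReal φ) (hlsc : LowerSemicontinuous φ)
    (a b : ℝ) (ha : 0 < a) (hcoer : ∀ x, ((a * ‖x‖ + b : ℝ) : EReal) ≤ φ x)
    (m ε : ℝ) (hε : 0 < ε)
    (hmin : ∀ x, (m : EReal) ≤ φ x) (hattain : ∃ x, φ x = (m : EReal))
    (hball : ∀ x, ‖x‖ ≤ ε → φ x < (m : EReal) + ((1 / 2 : ℝ) : EReal))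
    (u : EuclideanSpace ℝ (Fin n)) :
    ∃! s₀ : ℝ, 0 < s₀ ∧
      (s₀ • u, Real.log (1 / s₀)) ∈
        frontier {p : EuclideanSpace ℝ (Fin n) × ℝ | φ p.1 ≤ (p.2 : EReal)} ∧
      (∀ s : ℝ, 0 < s → s < s₀ → (s • u, Real.log (1 / s)) ∈
        interior {p : EuclideanSpace ℝ (Fin n) × ℝ | φ p.1 ≤ (p.2 : EReal)}) ∧
      (∀ s : ℝ, s₀ < s → (s • u, Real.log (1 / s)) ∉
        {p : EuclideanSpace ℝ (Fin n) × ℝ | φ p.1 ≤ (p.2 : EReal)}) :=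
  statement8_general n φ hconv hlsc m ε hε hmin hball u

end
end

section
/- Let μ be a finite Borel measure on ℝⁿ with finite first moment, ν a finite Borel measure on S^{n-1}, satisfying: (i) ∫⟨x,θ⟩dμ + ∫⟨x,θ⟩dν = 0 for all θ ∈ ℝⁿ (centeredness), (ii) ∫|⟨x,y⟩|dμ(x) + ∫|⟨x,y⟩|dν(x) ≥ c|y| for all y with c > 0. Let φ: ℝⁿ → (-∞,∞] be convex, lsc, with min φ = φ(0). Then for all x ∈ ℝⁿ: φ(x) ≥ (1/μ(ℝⁿ))·( (c/2)|x| - ∫φ* dμ - ∫ φ̄* dν ), where φ̄*(θ) = lim_{λ→∞} φ*(p + λθ)/λ is the horizon (recession) function of φ*. -/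
/-!
Fix `x` and a real `t > φ x`; then also `φ 0 ≤ t`. Testing the supremum defining `φ*` at `x` and
at `0` gives `φ* y ≥ max ⟪x, y⟫ 0 - t`, and dividing by `λ` along `p + λ θ` gives
`φ̄* θ ≥ max ⟪x, θ⟫ 0`. On the other side, `|r| = 2 max r 0 - r` together with the centering and
the lower bound yields `c ‖x‖ ≤ 2 (∫ max ⟪·, x⟫ 0 dμ + ∫ max ⟪·, x⟫ 0 dν)`. Integrating the two
pointwise bounds, `∫ φ* dμ + ∫ φ̄* dν ≥ (c / 2) ‖x‖ - t μ(ℝⁿ)`.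
-/

open MeasureTheory Filter ENNReal

noncomputable section

/-- The nonnegative part of an extended real, as `ℝ≥0∞`. -/
def erealPos (x : EReal) : ℝ≥0∞ :=
  if x = ⊤ then ⊤ else ENNReal.ofReal x.toReal

/-- The integral of an `EReal`-valued function, with values in `EReal`
(possibly `+∞`), defined via positive and negative parts. -/
def erealIntegral {n : ℕ} (μ : Measure (EuclideanSpace ℝ (Fin n)))
    (f : EuclideanSpace ℝ (Fin n) → EReal) : EReal :=
  ((∫⁻ x, erealPos (f x) ∂μ : ℝ≥0∞) : EReal) - ((∫⁻ x, erealPos (-(f x)) ∂μ : ℝ≥0∞) : EReal)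

open Topology

lemma erealPos_eq_toENNReal : erealPos = EReal.toENNReal := rfl

theorem coe_integral_le_erealIntegral {n : ℕ} {μ : Measure (EuclideanSpace ℝ (Fin n))}
    {f : EuclideanSpace ℝ (Fin n) → EReal} {g : EuclideanSpace ℝ (Fin n) → ℝ}
    (hg : Integrable g μ) (hgf : ∀ y, (g y : EReal) ≤ f y) :
    ((∫ y, g y ∂μ : ℝ) : EReal) ≤ erealIntegral μ f := by
  have hpos : ∫⁻ y, ENNReal.ofReal (g y) ∂μ ≤ ∫⁻ y, erealPos (f y) ∂μ :=
    lintegral_mono fun y => EReal.toENNReal_le_toENNReal (hgf y)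
  have hneg : ∫⁻ y, erealPos (-f y) ∂μ ≤ ∫⁻ y, ENNReal.ofReal (-g y) ∂μ :=
    lintegral_mono fun y => by
      rw [erealPos_eq_toENNReal, ← EReal.real_coe_toENNReal, EReal.coe_neg]
      exact EReal.toENNReal_le_toENNReal (EReal.neg_le_neg_iff.2 (hgf y))
  have hneg_fin : ∫⁻ y, ENNReal.ofReal (-g y) ∂μ ≠ ⊤ := hg.neg.lintegral_lt_top.ne
  rw [integral_eq_lintegral_pos_part_sub_lintegral_neg_part hg, EReal.coe_sub,
    EReal.coe_ennreal_toReal hg.lintegral_lt_top.ne, EReal.coe_ennreal_toReal hneg_fin]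
  exact EReal.sub_le_sub (EReal.coe_ennreal_le_coe_ennreal_iff.2 hpos)
    (EReal.coe_ennreal_le_coe_ennreal_iff.2 hneg)

theorem le_legendre_of_le {n : ℕ} {φ : EuclideanSpace ℝ (Fin n) → EReal}
    {x : EuclideanSpace ℝ (Fin n)} {t : ℝ} (hx : φ x ≤ t) (y : EuclideanSpace ℝ (Fin n)) :
    ((inner ℝ x y - t : ℝ) : EReal) ≤ legendre φ y :=
  calc ((inner ℝ x y - t : ℝ) : EReal) ≤ ((inner ℝ x y : ℝ) : EReal) - φ x := by
        rw [EReal.coe_sub]; exact EReal.sub_le_sub le_rfl hx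
    _ ≤ legendre φ y := le_iSup (fun z => ((inner ℝ z y : ℝ) : EReal) - φ z) x

theorem max_inner_sub_le_legendre {n : ℕ} {φ : EuclideanSpace ℝ (Fin n) → EReal}
    {x : EuclideanSpace ℝ (Fin n)} {t : ℝ} (hx : φ x ≤ t) (h0 : φ 0 ≤ t)
    (y : EuclideanSpace ℝ (Fin n)) :
    ((max (inner ℝ y x) 0 - t : ℝ) : EReal) ≤ legendre φ y := by
  rcases le_total (inner ℝ y x) 0 with hyx | hyx
  · simpa [max_eq_right hyx] using le_legendre_of_le h0 y
  · rw [max_eq_left hyx, real_inner_comm]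
    exact le_legendre_of_le hx y

theorem le_of_tendsto_mul_inv_of_affine_le {f : ℝ → EReal} {l : EReal} {a b : ℝ}
    (hf : Tendsto (fun r => f r * ((r⁻¹ : ℝ) : EReal)) atTop (𝓝 l))
    (hle : ∀ r, ((a + b * r : ℝ) : EReal) ≤ f r) : (b : EReal) ≤ l := by
  have hlim : Tendsto (fun r : ℝ => ((a * r⁻¹ + b : ℝ) : EReal)) atTop (𝓝 (b : EReal)) := by
    rw [EReal.tendsto_coe]
    simpa using (tendsto_inv_atTop_zero.const_mul a).add_const b
  refine le_of_tendsto_of_tendsto hlim hf ?_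
  filter_upwards [eventually_gt_atTop 0] with r hr
  calc ((a * r⁻¹ + b : ℝ) : EReal) = ((a + b * r : ℝ) : EReal) * ((r⁻¹ : ℝ) : EReal) := by
        rw [← EReal.coe_mul]; congr 1; field_simp
    _ ≤ f r * ((r⁻¹ : ℝ) : EReal) :=
        mul_le_mul_of_nonneg_right (hle r) (EReal.coe_nonneg.2 (inv_nonneg.2 hr.le))

theorem max_inner_le_of_tendsto_legendre {n : ℕ} {φ : EuclideanSpace ℝ (Fin n) → EReal}
    {x : EuclideanSpace ℝ (Fin n)} {t : ℝ} (hx : φ x ≤ t) (h0 : φ 0 ≤ t)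
    {p θ : EuclideanSpace ℝ (Fin n)} {b : EReal}
    (hb : Tendsto (fun r : ℝ => legendre φ (p + r • θ) * ((r⁻¹ : ℝ) : EReal)) atTop (𝓝 b)) :
    ((max (inner ℝ θ x) 0 : ℝ) : EReal) ≤ b := by
  rcases le_total (inner ℝ θ x) 0 with hθx | hθx
  · rw [max_eq_right hθx]
    refine le_of_tendsto_mul_inv_of_affine_le (a := -t) hb fun r => ?_
    simpa using le_legendre_of_le h0 (p + r • θ)
  · rw [max_eq_left hθx]
    refine le_of_tendsto_mul_inv_of_affine_le (a := inner ℝ x p - t) hb fun r => ?_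
    convert le_legendre_of_le hx (p + r • θ) using 2
    rw [inner_add_right, real_inner_smul_right, real_inner_comm θ]
    ring

theorem integral_abs_eq_two_mul_integral_max_sub {α : Type*} [MeasurableSpace α]
    {ρ : Measure α} {f : α → ℝ} (hf : Integrable f ρ) :
    ∫ a, |f a| ∂ρ = 2 * ∫ a, max (f a) 0 ∂ρ - ∫ a, f a ∂ρ := by
  have habs : ∀ r : ℝ, |r| = 2 * max r 0 - r := fun r => by
    rcases le_total r 0 with hr | hr
    · rw [abs_of_nonpos hr, max_eq_right hr]; ring
    · rw [abs_of_nonneg hr, max_eq_left hr]; ring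
  simp_rw [habs]
  rw [integral_sub (hf.pos_part.const_mul 2) hf, integral_const_mul]

theorem integrable_inner_const_of_integrable_norm {n : ℕ} {ρ : Measure (EuclideanSpace ℝ (Fin n))}
    (h : Integrable (fun y => ‖y‖) ρ) (x : EuclideanSpace ℝ (Fin n)) :
    Integrable (fun y => inner ℝ y x) ρ :=
  ((integrable_norm_iff aestronglyMeasurable_id).1 h).inner_const x

theorem integrable_norm_of_measure_norm_ne_one {n : ℕ} {ν : Measure (EuclideanSpace ℝ (Fin n))}
    [IsFiniteMeasure ν] (hν : ν {x | ‖x‖ ≠ 1} = 0) : Integrable (fun y => ‖y‖) ν :=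
  (integrable_const (1 : ℝ)).congr <| (measure_eq_zero_iff_ae_notMem.1 hν).mono fun _ hy =>
    (not_not.1 hy).symm

theorem statement11_general (n : ℕ)
    (μ ν : Measure (EuclideanSpace ℝ (Fin n)))
    [IsFiniteMeasure μ] [IsFiniteMeasure ν]
    (hμ : μ Set.univ ≠ 0)
    (hmom : Integrable (fun x => ‖x‖) μ)
    (hν : ν {x | ‖x‖ ≠ 1} = 0)
    (hcent : ∀ θ : EuclideanSpace ℝ (Fin n),
      (∫ x, (inner ℝ x θ : ℝ) ∂μ) + ∫ x, (inner ℝ x θ : ℝ) ∂ν = 0)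
    (c : ℝ)
    (hlow : ∀ y, c * ‖y‖ ≤ (∫ x, |(inner ℝ x y : ℝ)| ∂μ) + ∫ x, |(inner ℝ x y : ℝ)| ∂ν)
    (φ : EuclideanSpace ℝ (Fin n) → EReal)
    (hmin0 : ∀ x, φ 0 ≤ φ x)
    (bar : EuclideanSpace ℝ (Fin n) → EReal)
    (p : EuclideanSpace ℝ (Fin n))
    (hbar : ∀ θ : EuclideanSpace ℝ (Fin n),
      Tendsto (fun lam : ℝ => legendre φ (p + lam • θ) * ((lam⁻¹ : ℝ) : EReal))
        atTop (nhds (bar θ))) :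
    ∀ x : EuclideanSpace ℝ (Fin n),
      ((((μ Set.univ).toReal)⁻¹ : ℝ) : EReal) *
        (((c / 2 * ‖x‖ : ℝ) : EReal) - erealIntegral μ (legendre φ) - erealIntegral ν bar)
        ≤ φ x := by
  intro x
  refine EReal.le_of_forall_lt_iff_le.1 fun t ht => ?_
  have h0 : φ 0 ≤ t := (hmin0 x).trans ht.le
  set m := (μ Set.univ).toReal
  have hm : 0 < m := ENNReal.toReal_pos hμ (measure_ne_top μ _)
  have hintμ := integrable_inner_const_of_integrable_norm hmom x
  have hintν := integrable_inner_const_of_integrable_norm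
    (integrable_norm_of_measure_norm_ne_one hν) x
  set Gμ := ∫ y, max (inner ℝ y x) 0 ∂μ
  set Gν := ∫ y, max (inner ℝ y x) 0 ∂ν
  have hgap : c * ‖x‖ ≤ 2 * (Gμ + Gν) := by
    have := hlow x
    rw [integral_abs_eq_two_mul_integral_max_sub hintμ,
      integral_abs_eq_two_mul_integral_max_sub hintν] at this
    linarith [hcent x]
  have hIμ : ((Gμ - t * m : ℝ) : EReal) ≤ erealIntegral μ (legendre φ) := by
    have := coe_integral_le_erealIntegral (g := fun y => max (inner ℝ y x) 0 - t)
      (hintμ.pos_part.sub (integrable_const t))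
      (max_inner_sub_le_legendre ht.le h0)
    rwa [integral_sub hintμ.pos_part (integrable_const t), integral_const, smul_eq_mul,
      Measure.real, mul_comm] at this
  have hIν : (Gν : EReal) ≤ erealIntegral ν bar :=
    coe_integral_le_erealIntegral hintν.pos_part fun θ =>
      max_inner_le_of_tendsto_legendre ht.le h0 (hbar θ)
  calc ((m⁻¹ : ℝ) : EReal) * (((c / 2 * ‖x‖ : ℝ) : EReal) - erealIntegral μ (legendre φ)
        - erealIntegral ν bar)
      ≤ ((m⁻¹ : ℝ) : EReal) * ((c / 2 * ‖x‖ - (Gμ - t * m) - Gν : ℝ) : EReal) := by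
        rw [EReal.coe_sub, EReal.coe_sub]
        exact mul_le_mul_of_nonneg_left (EReal.sub_le_sub (EReal.sub_le_sub le_rfl hIμ) hIν)
          (EReal.coe_nonneg.2 (inv_nonneg.2 hm.le))
    _ ≤ t := by
        rw [← EReal.coe_mul, EReal.coe_le_coe_iff, inv_mul_le_iff₀ hm]
        linarith

/-- Under centeredness of `μ + ν` and the norm lower bound, for any convex lsc
`φ` with `min φ = φ(0)` one has
`φ(x) ≥ (1/μ(ℝⁿ))·((c/2)|x| - ∫ φ* dμ - ∫ φ̄* dν)`, where `φ̄*` is the horizon (recession)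
function of `φ*`. -/
theorem statement11 (n : ℕ)
    (μ ν : Measure (EuclideanSpace ℝ (Fin n)))
    [IsFiniteMeasure μ] [IsFiniteMeasure ν]
    (hμ : μ Set.univ ≠ 0)
    (hmom : Integrable (fun x => ‖x‖) μ)
    (hν : ν {x | ‖x‖ ≠ 1} = 0)
    (hcent : ∀ θ : EuclideanSpace ℝ (Fin n),
      (∫ x, (inner ℝ x θ : ℝ) ∂μ) + ∫ x, (inner ℝ x θ : ℝ) ∂ν = 0)
    (c : ℝ) (hc : 0 < c)
    (hlow : ∀ y, c * ‖y‖ ≤ (∫ x, |(inner ℝ x y : ℝ)| ∂μ) + ∫ x, |(inner ℝ x y : ℝ)| ∂ν)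
    (φ : EuclideanSpace ℝ (Fin n) → EReal)
    (hbot : ∀ x, φ x ≠ ⊥) (hconv : ConvexEReal φ) (hlsc : LowerSemicontinuous φ)
    (hmin0 : ∀ x, φ 0 ≤ φ x) (hfin : φ 0 ≠ ⊤)
    (bar : EuclideanSpace ℝ (Fin n) → EReal)
    (p : EuclideanSpace ℝ (Fin n)) (hp : legendre φ p ≠ ⊤)
    (hbar : ∀ θ : EuclideanSpace ℝ (Fin n),
      Tendsto (fun lam : ℝ => legendre φ (p + lam • θ) * ((lam⁻¹ : ℝ) : EReal))
        atTop (nhds (bar θ))) :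
    ∀ x : EuclideanSpace ℝ (Fin n),
      ((((μ Set.univ).toReal)⁻¹ : ℝ) : EReal) *
        (((c / 2 * ‖x‖ : ℝ) : EReal) - erealIntegral μ (legendre φ) - erealIntegral ν bar)
        ≤ φ x :=
  statement11_general n μ ν hμ hmom hν hcent c hlow φ hmin0 bar p hbar

end
end

section
/- Let ξ: ℝⁿ → ℝ be continuous such that ξ̄(θ) = lim_{λ→∞} ξ(λθ)/λ exists finitely and uniformly in θ ∈ S^{n-1}. Define ξ̂ on the open lower half-sphere Sⁿ_- = {(x,t) ∈ Sⁿ ⊂ ℝⁿ⁺¹ : t < 0} by ξ̂(x,t) = |t|·ξ(x/|t|). Then the function h on the closed lower half-sphere given by h(x,t) = ξ̂(x,t) for t < 0 and h(x,0) = ξ̄(x) for (x,0) with |x| = 1, is continuous. -/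
open Filter Topology Metric

theorem TendstoUniformlyOn.comp_tendsto {ι κ α β : Type*} [UniformSpace β] {F : ι → α → β}
    {f : α → β} {p : Filter ι} {s : Set α} (h : TendstoUniformlyOn F f p s) {l : Filter κ}
    {φ : κ → ι} (hφ : Tendsto φ l p) : TendstoUniformlyOn (fun k => F (φ k)) f l s :=
  fun u hu => hφ (h u hu)

section Perspective

variable {E : Type*} [NormedAddCommGroup E] [NormedSpace ℝ E]

/-- The paper's `ξ̂`, extended to all `(x, t)` by `|t| ξ(x / |t|)`. -/
noncomputable def perspective (ξ : E → ℝ) (q : E × ℝ) : ℝ := |q.2| * ξ (|q.2|⁻¹ • q.1)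

theorem continuousAt_perspective {ξ : E → ℝ} (hξ : Continuous ξ) {q : E × ℝ} (hq : q.2 ≠ 0) :
    ContinuousAt (perspective ξ) q := by
  unfold perspective
  fun_prop (disch := positivity)

theorem perspective_eq_norm_mul_div {ξ : E → ℝ} {x : E} {t : ℝ} (hx : x ≠ 0) (ht : t ≠ 0) :
    perspective ξ (x, t) = ‖x‖ * (ξ ((‖x‖ * |t|⁻¹) • ‖x‖⁻¹ • x) / (‖x‖ * |t|⁻¹)) := by
  have hx' : ‖x‖ ≠ 0 := norm_ne_zero_iff.2 hx
  have ht' : |t| ≠ 0 := abs_ne_zero.2 ht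
  rw [perspective, smul_smul, mul_right_comm, mul_inv_cancel₀ hx', one_mul]
  field_simp

/-- Writing `x = ‖x‖ θ` and `λ = ‖x‖ / |t|`, we have `ξ̂(x, t) = ‖x‖ ξ(λθ)/λ`, where `‖x‖ → 1`,
`θ → x₀` on the sphere and `λ → ∞`. -/
theorem tendsto_perspective_nhdsWithin_lowerHalf {ξ ξbar : E → ℝ}
    (hunif : TendstoUniformlyOn (fun lam θ => ξ (lam • θ) / lam) ξbar atTop (sphere 0 1))
    {x₀ : E} (hx₀ : ‖x₀‖ = 1) (hcont : ContinuousWithinAt ξbar (sphere 0 1) x₀) :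
    Tendsto (perspective ξ) (𝓝[{q | q.2 < 0}] (x₀, 0)) (𝓝 (ξbar x₀)) := by
  set l := 𝓝[{q : E × ℝ | q.2 < 0}] (x₀, 0)
  have hnorm : Tendsto (fun q : E × ℝ => ‖q.1‖) l (𝓝 1) :=
    hx₀ ▸ (continuous_fst.norm.tendsto _).mono_left nhdsWithin_le_nhds
  have hne : ∀ᶠ q in l, q.1 ≠ 0 :=
    (hnorm.eventually (lt_mem_nhds one_pos)).mono fun q hq => norm_pos_iff.1 hq
  have hneg : ∀ᶠ q in l, q.2 < 0 := self_mem_nhdsWithin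
  have hθ : Tendsto (fun q : E × ℝ => ‖q.1‖⁻¹ • q.1) l (𝓝[sphere 0 1] x₀) := by
    refine tendsto_nhdsWithin_iff.2 ⟨?_, hne.mono fun q hq => ?_⟩
    · simpa [hx₀] using (hnorm.inv₀ one_ne_zero).smul
        ((continuous_fst.tendsto (x₀, (0 : ℝ))).mono_left nhdsWithin_le_nhds)
    · simpa using norm_smul_inv_norm (𝕜 := ℝ) hq
  have habs : Tendsto (fun q : E × ℝ => |q.2|) l (𝓝[>] 0) := by
    refine tendsto_nhdsWithin_iff.2 ⟨?_, hneg.mono fun q hq => abs_pos.2 hq.ne⟩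
    simpa using (continuous_snd.abs.tendsto (x₀, (0 : ℝ))).mono_left nhdsWithin_le_nhds
  have hlam : Tendsto (fun q : E × ℝ => ‖q.1‖ * |q.2|⁻¹) l atTop :=
    hnorm.pos_mul_atTop one_pos habs.inv_tendsto_nhdsGT_zero
  have hlim := hnorm.mul ((hunif.comp_tendsto hlam).tendsto_comp hcont hθ)
  rw [one_mul] at hlim
  refine hlim.congr' ((hne.and hneg).mono fun q ⟨hq₁, hq₂⟩ => ?_)
  exact (perspective_eq_norm_mul_div hq₁ hq₂.ne).symm

theorem continuousWithinAt_ite_perspective {ξ ξbar : E → ℝ}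
    (hunif : TendstoUniformlyOn (fun lam θ => ξ (lam • θ) / lam) ξbar atTop (sphere 0 1))
    (hcont : ContinuousOn ξbar (sphere 0 1)) {x₀ : E} (hx₀ : ‖x₀‖ = 1) :
    ContinuousWithinAt (fun q : E × ℝ => if q.2 < 0 then perspective ξ q else ξbar q.1)
      ({q | q.2 < 0} ∪ {q | q.2 = 0 ∧ ‖q.1‖ = 1}) (x₀, 0) := by
  have hx₀' : x₀ ∈ sphere 0 1 := mem_sphere_zero_iff_norm.2 hx₀
  have hval : (if (0 : ℝ) < 0 then perspective ξ (x₀, 0) else ξbar x₀) = ξbar x₀ :=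
    if_neg (lt_irrefl 0)
  refine ContinuousWithinAt.union ?_ ?_
  · rw [ContinuousWithinAt, hval]
    exact (tendsto_perspective_nhdsWithin_lowerHalf hunif hx₀ (hcont x₀ hx₀')).congr'
      (eventually_nhdsWithin_of_forall fun q hq => (if_pos hq).symm)
  · have hfst : ContinuousWithinAt (fun q : E × ℝ => ξbar q.1) {q | q.2 = 0 ∧ ‖q.1‖ = 1} (x₀, 0) :=
      (hcont x₀ hx₀').comp continuousWithinAt_fst fun q hq => mem_sphere_zero_iff_norm.2 hq.2
    exact hfst.congr (fun q hq => if_neg hq.1.not_lt) hval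

end Perspective

/-- If `ξ : ℝⁿ → ℝ` is continuous and `ξ̄(θ) = lim_{λ→∞} ξ(λθ)/λ` exists
uniformly in `θ ∈ S^{n-1}`, then the function `h` on the closed lower half-sphere of `Sⁿ`,
given by `h(x,t) = |t|ξ(x/|t|)` for `t < 0` and `h(x,0) = ξ̄(x)`, is continuous. -/
theorem statement13 (n : ℕ) (ξ : EuclideanSpace ℝ (Fin n) → ℝ) (hξ : Continuous ξ)
    (ξbar : EuclideanSpace ℝ (Fin n) → ℝ)
    (huni : ∀ ε > (0 : ℝ), ∃ Λ : ℝ, ∀ lam ≥ Λ, ∀ θ : EuclideanSpace ℝ (Fin n), ‖θ‖ = 1 →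
      |ξ (lam • θ) / lam - ξbar θ| < ε)
    (h : EuclideanSpace ℝ (Fin n) × ℝ → ℝ)
    (hh : ∀ p : EuclideanSpace ℝ (Fin n) × ℝ,
      h p = if p.2 < 0 then |p.2| * ξ ((|p.2|)⁻¹ • p.1) else ξbar p.1) :
    ContinuousOn h {p : EuclideanSpace ℝ (Fin n) × ℝ | ‖p.1‖ ^ 2 + p.2 ^ 2 = 1 ∧ p.2 ≤ 0} := by
  obtain rfl : h = fun p => if p.2 < 0 then perspective ξ p else ξbar p.1 := funext hh
  have hunif : TendstoUniformlyOn (fun lam θ => ξ (lam • θ) / lam) ξbar atTop (sphere 0 1) := by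
    refine Metric.tendstoUniformlyOn_iff.2 fun ε hε => ?_
    obtain ⟨Λ, hΛ⟩ := huni ε hε
    filter_upwards [eventually_ge_atTop Λ] with lam hlam θ hθ
    rw [dist_comm]
    exact hΛ lam hlam θ (mem_sphere_zero_iff_norm.1 hθ)
  have hcont : ContinuousOn ξbar (sphere 0 1) :=
    hunif.continuousOn (Frequently.of_forall fun lam => by fun_prop)
  have norm_eq_one {y : EuclideanSpace ℝ (Fin n)} (hy : ‖y‖ ^ 2 + (0 : ℝ) ^ 2 = 1) : ‖y‖ = 1 :=
    (pow_eq_one_iff_of_nonneg (norm_nonneg y) two_ne_zero).1 (by simpa using hy)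
  rintro ⟨x, t⟩ ⟨hxt, ht⟩
  rcases ht.lt_or_eq with ht | rfl
  · refine ((continuousAt_perspective hξ ht.ne).congr ?_).continuousWithinAt
    filter_upwards [(isOpen_Iio.preimage continuous_snd).mem_nhds ht] with q hq
    exact (if_pos hq).symm
  · refine (continuousWithinAt_ite_perspective hunif hcont (norm_eq_one hxt)).mono ?_
    rintro ⟨y, s⟩ ⟨hys, hs⟩
    rcases hs.lt_or_eq with hs | rfl
    · exact Or.inl hs
    · exact Or.inr ⟨rfl, norm_eq_one hys⟩
end
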